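/- Let $w \in \mathbb{C}$, let $\Omega, \Omega' \subseteq \mathbb{C}$ be bounded domains both containing $w$, and let $g$ (resp. $g'$) be a Green's function of $\Omega$ (resp. $\Omega'$) with pole at $w$, extended by zero. If $\sup_{z \in \mathbb{C} \setminus \{w\}} (g'(z) - g(z)) > 0$, then this supremum is attained at a point of $\partial\Omega$; in particular $\sup_{z \in \mathbb{C} \setminus \{w\}} (g'(z) - g(z)) = \sup_{z \in \partial\Omega} g'(z)$ (note $g = 0$ on $\partial\Omega$). -/

import Mathlib

open Filter Topology

/-- A function is harmonic on a set `s ⊆ ℂ` if it is `C²` there and its Laplacian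
(the sum of the second directional derivatives in the directions `1` and `I`) vanishes. -/
def HarmonicOnSet (f : ℂ → ℝ) (s : Set ℂ) : Prop :=
  ContDiffOn ℝ 2 f s ∧
  ∀ z ∈ s,
    fderiv ℝ (fun y => fderiv ℝ f y 1) z 1 +
      fderiv ℝ (fun y => fderiv ℝ f y Complex.I) z Complex.I = 0

/-- `g : ℂ → ℝ` is a Green's function of `Ω` with pole at `w`, extended by zero. -/
def IsGreensFunction (Ω : Set ℂ) (w : ℂ) (g : ℂ → ℝ) : Prop :=
  ContinuousOn g {w}ᶜ ∧
  (∀ z, z ∉ Ω → g z = 0) ∧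
  HarmonicOnSet g (Ω \ {w}) ∧
  ∃ C : ℝ, ∃ r > (0 : ℝ), ∀ z ∈ Metric.ball w r \ {w},
    |g z + Real.log ‖z - w‖| ≤ C

/-!
On `Ω' \ ∂Ω` the difference `g' - g` is harmonic off the pole (outside `closure Ω` it is just
`g'`) and bounded near the pole, where both functions have the same logarithmic singularity. Its
values on `∂Ω` are `g' ≤ B := max_{∂Ω} g'`, and off `Ω'` they are `-g ≤ 0` (`g ≥ 0` by the same
argument applied to `-g`). A maximum principle tolerating an isolated singularity that is bounded
above thus gives `g' - g ≤ max B 0` everywhere. A positive supremum then forces `B > 0`, and the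
supremum is `B`, attained where `g'` is maximal on `∂Ω`.

The maximum principle reduces to the maximum modulus principle, since locally a harmonic `u` is
`Re F` with `F` holomorphic and `‖exp F‖ = exp u`. The singularity is removed by adding
`ε log ‖z - w‖`, which tends to `-∞` at `w`, and letting `ε → 0`.
-/

open Set Metric Bornology InnerProductSpace

theorem frontier_sdiff_subset_union {X : Type*} [TopologicalSpace X] (s t : Set X) :
    frontier (s \ t) ⊆ frontier s ∪ frontier t := by
  rw [sdiff_eq, ← frontier_compl t]
  exact (frontier_inter_subset _ _).trans (union_subset_union inter_subset_left inter_subset_right)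

theorem Bornology.IsBounded.exists_isMaxOn_frontier {s : Set ℂ} {f : ℂ → ℝ}
    (hs : IsBounded s) (hne : s.Nonempty) (hf : ContinuousOn f (frontier s)) :
    ∃ z ∈ frontier s, IsMaxOn f (frontier s) z :=
  (hs.isCompact_closure.of_isClosed_subset isClosed_frontier frontier_subset_closure).exists_isMaxOn
    (nonempty_frontier_iff.2 ⟨hne, fun h => NormedSpace.unbounded_univ ℝ ℂ (h ▸ hs)⟩) hf

theorem fderiv_fderiv_apply {𝕜 E F : Type*} [NontriviallyNormedField 𝕜] [NormedAddCommGroup E]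
    [NormedSpace 𝕜 E] [NormedAddCommGroup F] [NormedSpace 𝕜 F] {f : E → F} {x : E}
    (hf : DifferentiableAt 𝕜 (fderiv 𝕜 f) x) (v w : E) :
    fderiv 𝕜 (fun y => fderiv 𝕜 f y v) x w = fderiv 𝕜 (fderiv 𝕜 f) x w v := by
  rw [fderiv_clm_apply hf (differentiableAt_const v)]
  simp

theorem HarmonicOnSet.harmonicOnNhd {f : ℂ → ℝ} {U : Set ℂ} (hU : IsOpen U)
    (hf : HarmonicOnSet f U) : HarmonicOnNhd f U := by
  intro x hx
  refine ⟨hf.1.contDiffAt (hU.mem_nhds hx), ?_⟩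
  filter_upwards [hU.mem_nhds hx] with y hy
  have hd : DifferentiableAt ℝ (fderiv ℝ f) y :=
    ((hf.1.contDiffAt (hU.mem_nhds hy)).fderiv_right (m := 1) le_rfl).differentiableAt one_ne_zero
  simp only [laplacian_eq_iteratedFDeriv_complexPlane, iteratedFDeriv_two_apply, Pi.zero_apply]
  simpa [← fderiv_fderiv_apply hd] using hf.2 y hy

theorem harmonicOnNhd_log_norm_sub (w : ℂ) :
    HarmonicOnNhd (fun z => Real.log ‖z - w‖) {w}ᶜ := fun _ hz =>
  (analyticAt_id.sub analyticAt_const).harmonicAt_log_norm (sub_ne_zero.2 hz)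

namespace InnerProductSpace

variable {u : ℂ → ℝ} {V : Set ℂ}

theorem HarmonicOnNhd.eqOn_ball_of_isMaxOn {c : ℂ} {R : ℝ}
    (hu : HarmonicOnNhd u (ball c R)) (hmax : IsMaxOn u (ball c R) c) :
    EqOn u (fun _ => u c) (ball c R) := by
  obtain ⟨F, hFan, hFre⟩ := hu.exists_analyticOnNhd_ball_re_eq
  have hnorm : ∀ z ∈ ball c R, ‖Complex.exp (F z)‖ = Real.exp (u z) := fun z hz => by
    rw [Complex.norm_exp, ← hFre hz]
  intro y hy
  have hcR : c ∈ ball c R := mem_ball_self (dist_nonneg.trans_lt hy)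
  have hsub : closedBall c (dist y c) ⊆ ball c R := closedBall_subset_ball (mem_ball.1 hy)
  have hdiff : DiffContOnCl ℂ (Complex.exp ∘ F) (ball c (dist y c)) :=
    DifferentiableOn.diffContOnCl fun z hz =>
      (hFan z (hsub (closure_ball_subset_closedBall hz))).differentiableAt.cexp
        |>.differentiableWithinAt
  have hmax' : IsMaxOn (norm ∘ Complex.exp ∘ F) (ball c (dist y c)) c := fun z hz => by
    have hz' := ball_subset_ball (mem_ball.1 hy).le hz
    simpa [hnorm z hz', hnorm c hcR] using hmax hz'
  have := Complex.norm_eqOn_closedBall_of_isMaxOn hdiff hmax' (mem_closedBall.2 le_rfl)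
  simpa [hnorm y hy, hnorm c hcR] using this

theorem HarmonicOnNhd.exists_mem_frontier_isMaxOn
    (hV : IsBounded V) (hne : V.Nonempty) (hc : ContinuousOn u (closure V))
    (hu : HarmonicOnNhd u V) : ∃ z ∈ frontier V, IsMaxOn u (closure V) z := by
  obtain ⟨x, hxV, hmax⟩ := hV.isCompact_closure.exists_isMaxOn hne.closure hc
  rw [closure_eq_interior_union_frontier, mem_union] at hxV
  rcases hxV with hxV | hxV
  swap
  · exact ⟨x, hxV, hmax⟩
  have hV_ne_univ : interior V ≠ univ :=
    ne_top_of_le_ne_top hV.isCompact_closure.ne_univ interior_subset_closure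
  obtain ⟨z, hz, hzx⟩ := exists_mem_frontier_infDist_compl_eq_dist hxV hV_ne_univ
  have hball : ball x (dist x z) ⊆ V := hzx ▸ ball_infDist_compl_subset.trans interior_subset
  have hzx_ne : dist x z ≠ 0 :=
    dist_ne_zero.2 fun h => hz.2 (by rwa [interior_interior, ← h])
  have hconst : EqOn u (fun _ => u x) (closure (ball x (dist x z))) :=
    (hu.mono hball).eqOn_ball_of_isMaxOn (hmax.on_subset (hball.trans subset_closure))
      |>.of_subset_closure (hc.mono (closure_mono hball)) continuousOn_const subset_closure le_rfl
  refine ⟨z, frontier_interior_subset hz, fun y hy => (hmax hy).out.trans_eq ?_⟩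
  rw [closure_ball x hzx_ne] at hconst
  exact (hconst (mem_closedBall.2 (dist_comm z x).le)).symm

theorem HarmonicOnNhd.le_of_forall_mem_frontier_le {b : ℝ}
    (hV : IsBounded V) (hc : ContinuousOn u (closure V)) (hu : HarmonicOnNhd u V)
    (hb : ∀ z ∈ frontier V, u z ≤ b) {z : ℂ} (hz : z ∈ closure V) : u z ≤ b := by
  obtain ⟨x, hx, hmax⟩ := hu.exists_mem_frontier_isMaxOn hV (closure_nonempty_iff.1 ⟨z, hz⟩) hc
  exact (hmax hz).trans (hb x hx)

theorem HarmonicOnNhd.le_of_forall_mem_frontier_le_of_sphere {w : ℂ} {b δ : ℝ}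
    (hV : IsBounded V) (hδ : 0 < δ) (hc : ContinuousOn u (closure V \ {w}))
    (hu : HarmonicOnNhd u (V \ {w})) (hb : ∀ z ∈ frontier V, z ≠ w → u z ≤ b)
    (hsphere : ∀ z ∈ sphere w δ, u z ≤ b) {z : ℂ} (hz : z ∈ V \ closedBall w δ) : u z ≤ b := by
  have hcl : closure (V \ closedBall w δ) ⊆ closure V \ ball w δ :=
    closure_minimal (sdiff_subset_sdiff subset_closure ball_subset_closedBall)
      (isClosed_closure.sdiff isOpen_ball)
  have hcl_w : closure (V \ closedBall w δ) ⊆ closure V \ {w} := fun y hy =>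
    ⟨(hcl hy).1, fun h => (hcl hy).2 (h ▸ mem_ball_self hδ)⟩
  refine (hu.mono ?_).le_of_forall_mem_frontier_le (hV.subset sdiff_subset) (hc.mono hcl_w)
    (fun y hy => ?_) (subset_closure hz)
  · exact sdiff_subset_sdiff_right (singleton_subset_iff.2 (mem_closedBall_self hδ.le))
  rcases frontier_sdiff_subset_union _ _ hy with hyV | hyS
  · exact hb y hyV (hcl_w (frontier_subset_closure hy)).2
  · exact hsphere y (frontier_closedBall w hδ.ne' ▸ hyS)

theorem HarmonicOnNhd.le_of_forall_mem_frontier_le_of_eventually_le {w : ℂ} {b C : ℝ}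
    (hV : IsBounded V) (hc : ContinuousOn u (closure V \ {w}))
    (hu : HarmonicOnNhd u (V \ {w})) (hw : ∀ᶠ z in 𝓝[≠] w, u z ≤ C)
    (hb : ∀ z ∈ frontier V, z ≠ w → u z ≤ b) {z : ℂ} (hz : z ∈ V \ {w}) : u z ≤ b := by
  obtain ⟨R, hR⟩ := hV.subset_closedBall w
  have hlogR : ∀ y ∈ closure V, y ≠ w → Real.log ‖y - w‖ ≤ Real.log R := fun y hy hyw =>
    Real.log_le_log (norm_pos_iff.2 (sub_ne_zero.2 hyw))
      (by simpa [dist_eq_norm] using isClosed_closedBall.closure_subset_iff.2 hR hy)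
  set K := Real.log R - Real.log ‖z - w‖
  suffices h : ∀ ε > 0, u z ≤ b + ε * K by
    have hlim : Tendsto (fun ε => b + ε * K) (𝓝[>] 0) (𝓝 b) := by
      simpa using ((tendsto_const_nhds (x := b)).add
        ((tendsto_id (x := 𝓝 (0 : ℝ))).mul_const K)).mono_left nhdsWithin_le_nhds
    exact ge_of_tendsto hlim (eventually_nhdsWithin_of_forall h)
  intro ε hε
  obtain ⟨r, hr, hur⟩ := Metric.eventually_nhds_iff.1 (eventually_nhdsWithin_iff.1 hw)
  obtain ⟨δ, ⟨⟨hδr, hδz⟩, hδlog⟩, hδ⟩ : ∃ δ, ((δ < r ∧ δ < dist z w) ∧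
      Real.log δ ≤ (b - C) / ε + Real.log R) ∧ 0 < δ :=
    ((((eventually_lt_nhds hr).and (eventually_lt_nhds (dist_pos.2 hz.2))).filter_mono
      nhdsWithin_le_nhds).and (Real.tendsto_log_nhdsGT_zero.eventually (eventually_le_atBot _))
      |>.and self_mem_nhdsWithin).exists
  have hkey := HarmonicOnNhd.le_of_forall_mem_frontier_le_of_sphere
    (u := fun y => u y + ε * Real.log ‖y - w‖) (b := b + ε * Real.log R) hV hδ
    (hc.add (continuousOn_const.mul
      ((harmonicOnNhd_log_norm_sub w).continuousOn.mono fun y hy => hy.2)))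
    (hu.add (((harmonicOnNhd_log_norm_sub w).mono fun y hy => hy.2).const_smul (c := ε)))
    (fun y hy hyw => by
      have := mul_le_mul_of_nonneg_left (hlogR y (frontier_subset_closure hy) hyw) hε.le
      linarith [hb y hy hyw])
    (fun y hy => by
      rw [mem_sphere, dist_eq_norm] at hy
      have hyw : y ≠ w := fun h => hδ.ne' (by simpa [h] using hy.symm)
      have huy : u y ≤ C := hur (by rw [dist_eq_norm, hy]; exact hδr) hyw
      have := mul_le_mul_of_nonneg_left hδlog hε.le
      rw [mul_add, mul_div_cancel₀ _ hε.ne'] at this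
      simp only [hy]
      linarith)
    ⟨hz.1, by simpa using hδz⟩
  simp only [K, mul_sub] at hkey ⊢
  linarith

end InnerProductSpace

namespace IsGreensFunction

variable {Ω : Set ℂ} {w : ℂ} {g : ℂ → ℝ}

theorem harmonicOnNhd (hΩ : IsOpen Ω) (hg : IsGreensFunction Ω w g) :
    HarmonicOnNhd g (Ω \ {w}) :=
  hg.2.2.1.harmonicOnNhd (hΩ.sdiff isClosed_singleton)

theorem eq_zero_of_mem_frontier (hΩ : IsOpen Ω) (hg : IsGreensFunction Ω w g) {z : ℂ}
    (hz : z ∈ frontier Ω) : g z = 0 :=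
  hg.2.1 z (hΩ.frontier_eq ▸ hz).2

theorem exists_eventually_abs_add_log_le (hg : IsGreensFunction Ω w g) :
    ∃ C, ∀ᶠ z in 𝓝[≠] w, |g z + Real.log ‖z - w‖| ≤ C := by
  obtain ⟨-, -, -, C, r, hr, hC⟩ := hg
  exact ⟨C, eventually_nhdsWithin_iff.2 <|
    eventually_of_mem (ball_mem_nhds w hr) fun z hz hzw => hC z ⟨hz, hzw⟩⟩

theorem nonneg (hΩ : IsOpen Ω) (hΩbdd : IsBounded Ω) (hg : IsGreensFunction Ω w g)
    {z : ℂ} (hz : z ≠ w) : 0 ≤ g z := by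
  by_cases hzΩ : z ∈ Ω
  swap
  · exact (hg.2.1 z hzΩ).ge
  obtain ⟨C, hC⟩ := hg.exists_eventually_abs_add_log_le
  have hnear : ∀ᶠ y in 𝓝[≠] w, (-g) y ≤ C := by
    filter_upwards [hC, nhdsWithin_le_nhds (ball_mem_nhds w one_pos)] with y hy hy1
    have : Real.log ‖y - w‖ ≤ 0 :=
      Real.log_nonpos (norm_nonneg _) (by simpa [dist_eq_norm] using (mem_ball.1 hy1).le)
    show -g y ≤ C
    linarith [(abs_le.1 hy).1]
  have := (hg.harmonicOnNhd hΩ).neg.le_of_forall_mem_frontier_le_of_eventually_le (b := 0) hΩbdd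
    (hg.1.neg.mono fun y hy => hy.2) hnear
    (fun y hy _ => by simp [hg.eq_zero_of_mem_frontier hΩ hy]) ⟨hzΩ, hz⟩
  simpa using this

theorem sub_le_of_forall_mem_frontier_le {Ω' : Set ℂ} {g' : ℂ → ℝ} {b : ℝ} (hΩ : IsOpen Ω)
    (hΩbdd : IsBounded Ω) (hΩ' : IsOpen Ω') (hΩ'bdd : IsBounded Ω')
    (hg : IsGreensFunction Ω w g) (hg' : IsGreensFunction Ω' w g')
    (hb : ∀ x ∈ frontier Ω, g' x ≤ b) (hb0 : 0 ≤ b) {z : ℂ} (hz : z ≠ w) :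
    g' z - g z ≤ b := by
  have hout : ∀ x, x ≠ w → x ∉ Ω' ∨ x ∈ frontier Ω → g' x - g x ≤ b := by
    rintro x hxw (hx | hx)
    · rw [hg'.2.1 x hx]
      linarith [hg.nonneg hΩ hΩbdd hxw]
    · rw [hg.eq_zero_of_mem_frontier hΩ hx, sub_zero]
      exact hb x hx
  by_cases hzout : z ∉ Ω' ∨ z ∈ frontier Ω
  · exact hout z hz hzout
  push Not at hzout
  obtain ⟨C, hC⟩ := hg.exists_eventually_abs_add_log_le
  obtain ⟨C', hC'⟩ := hg'.exists_eventually_abs_add_log_le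
  refine HarmonicOnNhd.le_of_forall_mem_frontier_le_of_eventually_le (C := C' + C)
    (hΩ'bdd.subset sdiff_subset) ((hg'.1.sub hg.1).mono fun y hy => hy.2) ?_ ?_ ?_ ⟨hzout, hz⟩
  · rintro x ⟨⟨hxΩ', hxfr⟩, hxw⟩
    by_cases hxΩ : x ∈ Ω
    · exact (hg'.harmonicOnNhd hΩ' x ⟨hxΩ', hxw⟩).sub (hg.harmonicOnNhd hΩ x ⟨hxΩ, hxw⟩)
    have hxcl : x ∉ closure Ω := fun h => hxfr ⟨h, by rwa [hΩ.interior_eq]⟩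
    refine (harmonicAt_congr_nhds ?_).2 (hg'.harmonicOnNhd hΩ' x ⟨hxΩ', hxw⟩)
    filter_upwards [isClosed_closure.isOpen_compl.mem_nhds hxcl] with y hy
    simp [hg.2.1 y fun h => hy (subset_closure h)]
  · filter_upwards [hC, hC'] with y hy hy'
    simp only [Pi.sub_apply]
    linarith [abs_le.1 hy, abs_le.1 hy']
  · intro x hx hxw
    refine hout x hxw ?_
    rcases frontier_sdiff_subset_union _ _ hx with h | h
    · exact Or.inl (hΩ'.frontier_eq ▸ h).2
    · exact Or.inr (frontier_subset_iff_isClosed.2 isClosed_frontier h)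

end IsGreensFunction

theorem green_difference_max_on_boundary_general
    (w : ℂ) (Ω Ω' : Set ℂ) (g g' : ℂ → ℝ)
    (hΩopen : IsOpen Ω) (hΩbdd : Bornology.IsBounded Ω)
    (hΩ'open : IsOpen Ω') (hΩ'bdd : Bornology.IsBounded Ω')
    (hw : w ∈ Ω)
    (hg : IsGreensFunction Ω w g) (hg' : IsGreensFunction Ω' w g')
    (hpos : 0 < sSup ((fun z => g' z - g z) '' {w}ᶜ)) :
    (∃ z ∈ frontier Ω, g' z - g z = sSup ((fun z => g' z - g z) '' {w}ᶜ)) ∧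
    sSup ((fun z => g' z - g z) '' {w}ᶜ) = sSup (g' '' frontier Ω) := by
  have hw_fr : w ∉ frontier Ω := fun h => (hΩopen.frontier_eq ▸ h).2 hw
  obtain ⟨z₀, hz₀, hmax⟩ := hΩbdd.exists_isMaxOn_frontier ⟨w, hw⟩
    (hg'.1.mono fun x hx hxw => hw_fr (hxw ▸ hx))
  have hz₀w : z₀ ≠ w := fun h => hw_fr (h ▸ hz₀)
  set S := (fun z => g' z - g z) '' {w}ᶜ
  have hS_le : ∀ s ∈ S, s ≤ max (g' z₀) 0 := by
    rintro _ ⟨z, hz, rfl⟩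
    exact hg.sub_le_of_forall_mem_frontier_le hΩopen hΩbdd hΩ'open hΩ'bdd hg'
      (fun x hx => (hmax hx).out.trans (le_max_left _ _)) (le_max_right _ _) hz
  have hz₀S : g' z₀ ∈ S := ⟨z₀, hz₀w, by simp [hg.eq_zero_of_mem_frontier hΩopen hz₀]⟩
  have hpos₀ : 0 < g' z₀ := by
    by_contra! h
    have := csSup_le ⟨_, hz₀S⟩ hS_le
    rw [max_eq_right h] at this
    linarith
  have hS : sSup S = g' z₀ :=
    IsGreatest.csSup_eq ⟨hz₀S, fun s hs => (hS_le s hs).trans_eq (max_eq_left hpos₀.le)⟩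
  refine ⟨⟨z₀, hz₀, by rw [hS, hg.eq_zero_of_mem_frontier hΩopen hz₀, sub_zero]⟩, ?_⟩
  rw [hS, (IsGreatest.csSup_eq ⟨mem_image_of_mem g' hz₀, ?_⟩)]
  rintro _ ⟨x, hx, rfl⟩
  exact hmax hx

/-- If `Ω, Ω'` are bounded domains containing `w` with Green's functions `g, g'` (pole `w`,
extended by zero) and `sup_{z ≠ w} (g' z - g z) > 0`, then this supremum is attained at a
point of `∂Ω`, and it equals `sup_{∂Ω} g'`. -/
theorem green_difference_max_on_boundary
    (w : ℂ) (Ω Ω' : Set ℂ) (g g' : ℂ → ℝ)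
    (hΩopen : IsOpen Ω) (hΩconn : IsConnected Ω) (hΩbdd : Bornology.IsBounded Ω)
    (hΩ'open : IsOpen Ω') (hΩ'conn : IsConnected Ω') (hΩ'bdd : Bornology.IsBounded Ω')
    (hw : w ∈ Ω) (hw' : w ∈ Ω')
    (hg : IsGreensFunction Ω w g) (hg' : IsGreensFunction Ω' w g')
    (hpos : 0 < sSup ((fun z => g' z - g z) '' {w}ᶜ)) :
    (∃ z ∈ frontier Ω, g' z - g z = sSup ((fun z => g' z - g z) '' {w}ᶜ)) ∧
    sSup ((fun z => g' z - g z) '' {w}ᶜ) = sSup (g' '' frontier Ω) :=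
  green_difference_max_on_boundary_general w Ω Ω' g g' hΩopen hΩbdd hΩ'open hΩ'bdd hw hg hg' hpos
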